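/- Let A be a complete normed ring with unit 1, R : ℝ → A Bochner measurable, β : ℝ → ℝ integrable with ‖R(τ)‖ ≤ β(τ) a.e., and Q(t,0) the Dyson series with base point 0. Then for all 0 ≤ s ≤ t, ‖Q(t,0) − Q(s,0)‖ ≤ ∫_s^t β(t₁) · exp(∫_0^{t₁} β(τ) dτ) dt₁. -/

import Mathlib

open MeasureTheory intervalIntegral Filter Topology

/-- The `k`-fold time-ordered iterated Bochner integral
`∫_s^t R(t₁) (∫_s^{t₁} R(t₂) ( ⋯ (∫_s^{t_{k−1}} R(t_k) dt_k) ⋯ ) dt₂) dt₁`. -/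
noncomputable def timeOrderedIntegral {A : Type*} [NormedRing A] [NormedSpace ℝ A]
    (f : ℝ → A) (s : ℝ) : ℕ → ℝ → A
  | 0, _ => 1
  | k + 1, t => ∫ τ in s..t, f τ * timeOrderedIntegral f s k τ

/-- The Dyson series
`Q(t,s) = 1 + Σ_{k≥1} i^k ∫_s^t R(t₁) ∫_s^{t₁} R(t₂) ⋯ ∫_s^{t_{k−1}} R(t_k) dt_k ⋯ dt₁`. -/
noncomputable def dyson {A : Type*} [NormedRing A] [NormedAlgebra ℂ A]
    (R : ℝ → A) (s t : ℝ) : A :=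
  1 + ∑' k : ℕ, (Complex.I ^ (k + 1)) • timeOrderedIntegral R s (k + 1) t

/-!
Write `B u = ∫₀ᵘ β` and `T_k` for the `k`-th time-ordered integral. Then `‖T_k u‖ ≤ B u ^ k / k!`:
each step integrates `β · B ^ k / k!`, the a.e. derivative of the absolutely continuous function
`B ^ (k + 1) / (k + 1)!`. Hence `Q(t,0) - Q(s,0) = Σₖ iᵏ⁺¹ ∫ₛᵗ R T_k` is dominated termwise by
`∫ₛᵗ β B ^ k / k!`, and these sum to at most `∫ₛᵗ β exp B`.
-/

open Set

theorem AbsolutelyContinuousOnInterval.pow {f : ℝ → ℝ} {a b : ℝ}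
    (hf : AbsolutelyContinuousOnInterval f a b) (n : ℕ) :
    AbsolutelyContinuousOnInterval (f ^ n) a b := by
  induction n with
  | zero => exact (LipschitzWith.const (1 : ℝ)).lipschitzOnWith.absolutelyContinuousOnInterval
  | succ n ih => rw [pow_succ]; exact ih.mul hf

theorem integral_mul_primitive_pow {f : ℝ → ℝ} {a b : ℝ} (hf : IntervalIntegrable f volume a b)
    (k : ℕ) :
    ∫ x in a..b, f x * (∫ y in a..x, f y) ^ k = (∫ y in a..b, f y) ^ (k + 1) / (k + 1) := by
  set B : ℝ → ℝ := fun x => ∫ y in a..x, f y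
  have hB : AbsolutelyContinuousOnInterval B a b :=
    hf.absolutelyContinuousOnInterval_intervalIntegral left_mem_uIcc
  have hderiv : ∀ᵐ x, x ∈ uIoc a b → deriv (B ^ (k + 1)) x = (k + 1) * (f x * B x ^ k) := by
    filter_upwards [hf.ae_hasDerivAt_integral] with x hx hxab
    rw [((hx (uIoc_subset_uIcc hxab) a left_mem_uIcc).pow (k + 1)).deriv]
    push_cast
    ring
  have hFTC := (hB.pow (k + 1)).integral_deriv_eq_sub
  rw [intervalIntegral.integral_congr_ae hderiv, intervalIntegral.integral_const_mul] at hFTC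
  simp only [Pi.pow_apply, B, intervalIntegral.integral_same, zero_pow k.succ_ne_zero,
    sub_zero] at hFTC
  rw [← hFTC]
  field_simp

section TimeOrderedIntegral

variable {A : Type*} [NormedRing A] [NormedSpace ℝ A] {R : ℝ → A} {β : ℝ → ℝ} {a : ℝ}

theorem continuous_timeOrderedIntegral (hR : Integrable R) (a : ℝ) (k : ℕ) :
    Continuous (timeOrderedIntegral R a k) := by
  induction k with
  | zero => exact continuous_const
  | succ k ih =>
    exact intervalIntegral.continuous_primitive
      (fun _ _ => hR.intervalIntegrable.mul_continuousOn ih.continuousOn) a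

theorem timeOrderedIntegral_succ_sub (hR : Integrable R) (k : ℕ) (s t : ℝ) :
    timeOrderedIntegral R a (k + 1) t - timeOrderedIntegral R a (k + 1) s =
      ∫ τ in s..t, R τ * timeOrderedIntegral R a k τ :=
  have hint (u v : ℝ) :
      IntervalIntegrable (fun τ => R τ * timeOrderedIntegral R a k τ) volume u v :=
    hR.intervalIntegrable.mul_continuousOn (continuous_timeOrderedIntegral hR a k).continuousOn
  intervalIntegral.integral_interval_sub_left (hint a t) (hint a s)

theorem norm_integral_le_integral_mul_primitive_pow {g : ℝ → A} (hβ : Integrable β) {k : ℕ}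
    (hg : ∀ᵐ τ, a < τ → ‖g τ‖ ≤ β τ * ((∫ σ in a..τ, β σ) ^ k / k.factorial))
    {s t : ℝ} (has : a ≤ s) (hst : s ≤ t) :
    ‖∫ τ in s..t, g τ‖ ≤ ∫ τ in s..t, β τ * ((∫ σ in a..τ, β σ) ^ k / k.factorial) :=
  intervalIntegral.norm_integral_le_of_norm_le hst (hg.mono fun _ h hτ => h (has.trans_lt hτ.1))
    (hβ.intervalIntegrable.mul_continuousOn
      ((intervalIntegral.continuous_primitive (fun _ _ => hβ.intervalIntegrable) a).pow k
        |>.div_const _).continuousOn)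

theorem norm_integral_le_primitive_pow_div_factorial {g : ℝ → A} (hβ : Integrable β) {k : ℕ}
    (hg : ∀ᵐ τ, a < τ → ‖g τ‖ ≤ β τ * ((∫ σ in a..τ, β σ) ^ k / k.factorial))
    {u : ℝ} (hau : a ≤ u) :
    ‖∫ τ in a..u, g τ‖ ≤ (∫ τ in a..u, β τ) ^ (k + 1) / (k + 1).factorial := by
  refine (norm_integral_le_integral_mul_primitive_pow hβ hg le_rfl hau).trans_eq ?_
  simp_rw [mul_div_assoc', intervalIntegral.integral_div,
    integral_mul_primitive_pow hβ.intervalIntegrable, Nat.factorial_succ]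
  push_cast
  field_simp

/-- Bounding `R τ * T_k τ` rather than `T_k τ` avoids `‖1‖ ≤ 1`, which fails in a general
`NormedRing`. -/
theorem norm_mul_timeOrderedIntegral_le (hβ : Integrable β) (hRβ : ∀ᵐ τ, ‖R τ‖ ≤ β τ) (k : ℕ) :
    ∀ᵐ τ, a < τ → ‖R τ * timeOrderedIntegral R a k τ‖ ≤
      β τ * ((∫ σ in a..τ, β σ) ^ k / k.factorial) := by
  induction k with
  | zero => simpa [timeOrderedIntegral] using hRβ.mono fun τ h (_ : a < τ) => h
  | succ k ih =>
    have hβ0 : ∀ᵐ τ, 0 ≤ β τ := hRβ.mono fun τ h => (norm_nonneg _).trans h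
    filter_upwards [hRβ, hβ0] with τ hRτ hβτ hτ
    exact (norm_mul_le _ _).trans (mul_le_mul hRτ
      (norm_integral_le_primitive_pow_div_factorial hβ ih hτ.le) (norm_nonneg _) hβτ)

theorem norm_timeOrderedIntegral_succ_le (hβ : Integrable β) (hRβ : ∀ᵐ τ, ‖R τ‖ ≤ β τ) (k : ℕ)
    {u : ℝ} (hau : a ≤ u) :
    ‖timeOrderedIntegral R a (k + 1) u‖ ≤ (∫ τ in a..u, β τ) ^ (k + 1) / (k + 1).factorial :=
  norm_integral_le_primitive_pow_div_factorial hβ (norm_mul_timeOrderedIntegral_le hβ hRβ k) hau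

end TimeOrderedIntegral

theorem sum_range_integral_mul_pow_div_factorial_le {β B : ℝ → ℝ} {s t : ℝ} (hst : s ≤ t)
    (hβ : IntervalIntegrable β volume s t) (hβ0 : ∀ᵐ τ, 0 ≤ β τ) (hB : Continuous B)
    (hB0 : ∀ τ ∈ Icc s t, 0 ≤ B τ) (n : ℕ) :
    ∑ k ∈ Finset.range n, ∫ τ in s..t, β τ * (B τ ^ k / k.factorial) ≤
      ∫ τ in s..t, β τ * Real.exp (B τ) := by
  have hint (k : ℕ) : IntervalIntegrable (fun τ => β τ * (B τ ^ k / k.factorial)) volume s t :=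
    hβ.mul_continuousOn ((hB.pow k).div_const _).continuousOn
  rw [← intervalIntegral.integral_finsetSum fun k _ => hint k]
  simp_rw [← Finset.mul_sum]
  refine intervalIntegral.integral_mono_ae_restrict hst
    (hβ.mul_continuousOn (by fun_prop)) (hβ.mul_continuousOn (by fun_prop)) ?_
  filter_upwards [ae_restrict_of_ae hβ0, ae_restrict_mem measurableSet_Icc] with τ hβτ hτ
  exact mul_le_mul_of_nonneg_left (Real.sum_le_exp_of_nonneg (hB0 τ hτ) n) hβτ

section Dyson

variable {A : Type*} [NormedRing A] [NormedAlgebra ℂ A] [CompleteSpace A]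
  {R : ℝ → A} {β : ℝ → ℝ} {a : ℝ}

theorem summable_smul_timeOrderedIntegral (hβ : Integrable β) (hRβ : ∀ᵐ τ, ‖R τ‖ ≤ β τ)
    {u : ℝ} (hau : a ≤ u) :
    Summable fun k : ℕ => Complex.I ^ (k + 1) • timeOrderedIntegral R a (k + 1) u := by
  refine .of_norm_bounded ((summable_nat_add_iff 1).mpr
    (Real.summable_pow_div_factorial (∫ τ in a..u, β τ))) fun k => ?_
  rw [norm_smul, norm_pow, Complex.norm_I, one_pow, one_mul]
  exact norm_timeOrderedIntegral_succ_le hβ hRβ k hau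

theorem dyson_sub_dyson (hR : Integrable R) (hβ : Integrable β) (hRβ : ∀ᵐ τ, ‖R τ‖ ≤ β τ)
    {s t : ℝ} (has : a ≤ s) (hat : a ≤ t) :
    dyson R a t - dyson R a s =
      ∑' k : ℕ, Complex.I ^ (k + 1) • ∫ τ in s..t, R τ * timeOrderedIntegral R a k τ := by
  rw [dyson, dyson, add_sub_add_left_eq_sub,
    ← (summable_smul_timeOrderedIntegral hβ hRβ hat).tsum_sub
      (summable_smul_timeOrderedIntegral hβ hRβ has)]
  simp_rw [← smul_sub, timeOrderedIntegral_succ_sub hR]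

end Dyson

theorem dyson_difference_norm_le
    {A : Type*} [NormedRing A] [NormedAlgebra ℂ A] [CompleteSpace A]
    (R : ℝ → A) (β : ℝ → ℝ)
    (hR : AEStronglyMeasurable R (volume : Measure ℝ))
    (hβ : Integrable β (volume : Measure ℝ))
    (hRβ : ∀ᵐ τ ∂(volume : Measure ℝ), ‖R τ‖ ≤ β τ)
    (s t : ℝ) (hs : 0 ≤ s) (hst : s ≤ t) :
    ‖dyson R 0 t - dyson R 0 s‖ ≤
      ∫ t₁ in s..t, β t₁ * Real.exp (∫ τ in (0:ℝ)..t₁, β τ) := by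
  set B : ℝ → ℝ := fun u => ∫ τ in (0:ℝ)..u, β τ
  have hβ0 : ∀ᵐ τ, 0 ≤ β τ := hRβ.mono fun τ h => (norm_nonneg _).trans h
  set c : ℕ → ℝ := fun k => ∫ τ in s..t, β τ * (B τ ^ k / k.factorial)
  have hterm (k : ℕ) :
      ‖Complex.I ^ (k + 1) • ∫ τ in s..t, R τ * timeOrderedIntegral R 0 k τ‖ ≤ c k := by
    rw [norm_smul, norm_pow, Complex.norm_I, one_pow, one_mul]
    exact norm_integral_le_integral_mul_primitive_pow hβ (norm_mul_timeOrderedIntegral_le hβ hRβ k)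
      hs hst
  have hpartial := sum_range_integral_mul_pow_div_factorial_le hst hβ.intervalIntegrable hβ0
    (intervalIntegral.continuous_primitive (fun _ _ => hβ.intervalIntegrable) 0)
    (fun τ hτ => intervalIntegral.integral_nonneg_of_ae (hs.trans hτ.1) hβ0)
  have hc0 (k : ℕ) : 0 ≤ c k := (norm_nonneg _).trans (hterm k)
  rw [dyson_sub_dyson (hβ.mono' hR hRβ) hβ hRβ hs (hs.trans hst)]
  exact (tsum_of_norm_bounded (summable_of_sum_range_le hc0 hpartial).hasSum hterm).trans
    (Real.tsum_le_of_sum_range_le hc0 hpartial)
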